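/- arXiv:2108.04041 — 2 statements merged into one kernel-verified Lean document; each statement's English description precedes it below -/
import Mathlib

section
/- Let a1, b1, c1, a2, b2, c2 ∈ ℂ and set p1 = (a1·v² + b1·v + c1)·y² + v·y and p2 = (a2·v² + b2·v + c2)·y² in ℂ[v,y] ⊂ S. Then for ALL polynomials m1, m2 ∈ ℂ[v,y] ⊂ S, n1, n2 ∈ ℂ[v] ⊂ S and all constants l1, l2 ∈ ℂ, the derivations E1 = (−v²y² + p1·t + m1·t²)∂_y + ((1/2)·v²·t + n1·t²)∂_v + l1·t²·∂_t and E2 = (−y² + p2·t + m2·t²)∂_y + ((1/2)·t + n2·t²)∂_v + l2·t²·∂_t of S satisfy [E1,E2] ≢ 0 (mod t³); in fact ([E1,E2])(v) does not lie in the ideal generated by t³. (This is the computational core of the theorem that the action of Aut(𝔽₂) on the second Hirzebruch surface 𝔽₂ extends to its formally semi-universal deformation only up to first order.) -/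
open MvPolynomial

noncomputable section

/-- `S = ℂ[v,y,t]` with `v = X 0`, `y = X 1`, `t = X 2`. -/
abbrev S : Type := MvPolynomial (Fin 3) ℂ

/-- The variable `v`. -/ def V : S := X 0
/-- The variable `y`. -/ def Y : S := X 1
/-- The variable `t`. -/ def T : S := X 2

/-- The derivation `f ∂_y + g ∂_v + h ∂_t` of `S = ℂ[v,y,t]`, determined by
`y ↦ f`, `v ↦ g`, `t ↦ h`. -/
def der (f g h : S) : Derivation ℂ S S :=
  MvPolynomial.mkDerivation ℂ ![g, f, h]

/-- The inclusion `ℂ[v,y] ⊂ S` (where in `ℂ[v,y]` the variable `X 0` is `v`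
and `X 1` is `y`). -/
def ι2 : MvPolynomial (Fin 2) ℂ →ₐ[ℂ] S := aeval ![V, Y]

/-- The inclusion `ℂ[v] ⊂ S`. -/
def ι1 : Polynomial ℂ →ₐ[ℂ] S := Polynomial.aeval V

/-- `D ≡ D' (mod t³)`: the difference sends `y`, `v`, `t` into the ideal `(t³)`. -/
def ModT3 (D D' : Derivation ℂ S S) : Prop :=
  ∀ i : Fin 3, (D - D') (X i) ∈ Ideal.span {T ^ 3}

/-!
Only the `∂_v` and `∂_t` components of `E1`, `E2` enter `⁅E1, E2⁆ v`, since `E2 v` and `E1 v` are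
polynomials in `v` and `t`. Setting `y = 0` and reading `S` as `ℂ[v][t]`, the `t²`-coefficient of
`⁅E1, E2⁆ v` is `(l1 - v - l2 v²) / 2`, whose `v`-coefficient `-1/2` never vanishes.
-/

@[simp] lemma der_V (f g h : S) : der f g h V = g := by
  simp [der, V, mkDerivation_X]

@[simp] lemma der_T (f g h : S) : der f g h T = h := by
  simp [der, T, mkDerivation_X]

@[simp] lemma der_C (f g h : S) (a : ℂ) : der f g h (C a) = 0 :=
  derivation_C _ a

@[simp] lemma der_ι1 (f g h : S) (n : Polynomial ℂ) :
    der f g h (ι1 n) = ι1 (Polynomial.derivative n) * g := by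
  rw [ι1, Derivation.map_aeval]
  simp [smul_eq_mul, mul_comm]

def evalYZero : S →ₐ[ℂ] Polynomial (Polynomial ℂ) :=
  aeval ![Polynomial.C Polynomial.X, 0, Polynomial.X]

@[simp] lemma evalYZero_V : evalYZero V = Polynomial.C Polynomial.X := by simp [evalYZero, V]

@[simp] lemma evalYZero_T : evalYZero T = Polynomial.X := by simp [evalYZero, T]

@[simp] lemma evalYZero_C (a : ℂ) : evalYZero (C a) = Polynomial.C (Polynomial.C a) := by
  simp [evalYZero]

@[simp] lemma evalYZero_ι1 (n : Polynomial ℂ) : evalYZero (ι1 n) = Polynomial.C n := by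
  have hcomp : evalYZero.comp ι1 = (Polynomial.CAlgHom : Polynomial ℂ →ₐ[ℂ] _) := by
    ext; simp [ι1]
  exact congrArg (fun φ : Polynomial ℂ →ₐ[ℂ] _ => φ n) hcomp

lemma coeff_evalYZero_eq_zero_of_mem_span_T_pow {p : S} {k j : ℕ}
    (hp : p ∈ Ideal.span {T ^ k}) (hj : j < k) : (evalYZero p).coeff j = 0 := by
  obtain ⟨q, rfl⟩ := Ideal.mem_span_singleton'.mp hp
  rw [map_mul, map_pow, evalYZero_T, Polynomial.coeff_mul_X_pow', if_neg (by omega)]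

lemma evalYZero_bracket_V (f1 f2 : S) (n1 n2 : Polynomial ℂ) (l1 l2 : ℂ) :
    ∃ r, evalYZero (⁅der f1 (C (1 / 2 : ℂ) * V ^ 2 * T + ι1 n1 * T ^ 2) (C l1 * T ^ 2),
        der f2 (C (1 / 2 : ℂ) * T + ι1 n2 * T ^ 2) (C l2 * T ^ 2)⁆ V) =
      Polynomial.C (Polynomial.C (1 / 2 : ℂ) *
        (Polynomial.C l1 - Polynomial.X - Polynomial.C l2 * Polynomial.X ^ 2)) *
        Polynomial.X ^ 2 + r * Polynomial.X ^ 3 := by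
  refine ⟨Polynomial.C (Polynomial.C (1 / 2 : ℂ) * Polynomial.X ^ 2 * n2.derivative
      + Polynomial.C (2 * l1) * n2 - Polynomial.X * n2
      - Polynomial.C (1 / 2 : ℂ) * n1.derivative - Polynomial.C (2 * l2) * n1)
    + Polynomial.C (n1 * n2.derivative - n1.derivative * n2) * Polynomial.X, ?_⟩
  rw [Derivation.commutator_apply, der_V, der_V]
  simp only [Derivation.leibniz, Derivation.leibniz_pow, map_add, map_sub, map_mul, map_pow,
    der_V, der_T, der_ι1, der_C, smul_eq_mul, nsmul_eq_mul, evalYZero_V, evalYZero_T,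
    evalYZero_C, evalYZero_ι1, mul_zero, add_zero, Nat.cast_ofNat, map_ofNat]
  have half_mul_two : Polynomial.C (Polynomial.C (1 / 2 : ℂ)) * 2 = 1 := by
    rw [← Polynomial.C_ofNat, ← Polynomial.C_ofNat, ← map_mul, ← map_mul]
    norm_num
  linear_combination (-Polynomial.C (Polynomial.C (1 / 2 : ℂ)) * Polynomial.X ^ 2
    - Polynomial.X ^ 3 * Polynomial.C n2) * Polynomial.C Polynomial.X * half_mul_two

lemma coeff_two_evalYZero_bracket_V (f1 f2 : S) (n1 n2 : Polynomial ℂ) (l1 l2 : ℂ) :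
    (evalYZero (⁅der f1 (C (1 / 2 : ℂ) * V ^ 2 * T + ι1 n1 * T ^ 2) (C l1 * T ^ 2),
        der f2 (C (1 / 2 : ℂ) * T + ι1 n2 * T ^ 2) (C l2 * T ^ 2)⁆ V)).coeff 2 =
      Polynomial.C (1 / 2 : ℂ) *
        (Polynomial.C l1 - Polynomial.X - Polynomial.C l2 * Polynomial.X ^ 2) := by
  obtain ⟨r, hr⟩ := evalYZero_bracket_V f1 f2 n1 n2 l1 l2
  rw [hr, Polynomial.coeff_add, Polynomial.coeff_C_mul_X_pow, if_pos rfl,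
    Polynomial.coeff_mul_X_pow', if_neg (by norm_num), add_zero]

theorem no_second_order_extension_general
    (p1 p2 : MvPolynomial (Fin 2) ℂ) :
    ∀ (m1 m2 : MvPolynomial (Fin 2) ℂ) (n1 n2 : Polynomial ℂ) (l1 l2 : ℂ),
    ∀ E1 E2 : Derivation ℂ S S,
    E1 = der (-V ^ 2 * Y ^ 2 + ι2 p1 * T + ι2 m1 * T ^ 2)
        (C (1 / 2 : ℂ) * V ^ 2 * T + ι1 n1 * T ^ 2) (C l1 * T ^ 2) →
    E2 = der (-Y ^ 2 + ι2 p2 * T + ι2 m2 * T ^ 2)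
        (C (1 / 2 : ℂ) * T + ι1 n2 * T ^ 2) (C l2 * T ^ 2) →
    ¬ ModT3 ⁅E1, E2⁆ 0 ∧ ⁅E1, E2⁆ V ∉ Ideal.span {T ^ 3} := by
  intro m1 m2 n1 n2 l1 l2 E1 E2 hE1 hE2
  have hV : ⁅E1, E2⁆ V ∉ Ideal.span {T ^ 3} := fun hmem => by
    have hcoeff := coeff_evalYZero_eq_zero_of_mem_span_T_pow hmem (j := 2) (by norm_num)
    rw [hE1, hE2, coeff_two_evalYZero_bracket_V] at hcoeff
    have hv := congrArg (Polynomial.coeff · 1) hcoeff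
    simp [mul_sub] at hv
  exact ⟨fun h => hV (by simpa [V] using h 0), hV⟩

theorem no_second_order_extension (a1 b1 c1 a2 b2 c2 : ℂ)
    (p1 p2 : MvPolynomial (Fin 2) ℂ)
    (hp1 : p1 = (C a1 * X 0 ^ 2 + C b1 * X 0 + C c1) * X 1 ^ 2 + X 0 * X 1)
    (hp2 : p2 = (C a2 * X 0 ^ 2 + C b2 * X 0 + C c2) * X 1 ^ 2) :
    ∀ (m1 m2 : MvPolynomial (Fin 2) ℂ) (n1 n2 : Polynomial ℂ) (l1 l2 : ℂ),
    ∀ E1 E2 : Derivation ℂ S S,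
    E1 = der (-V ^ 2 * Y ^ 2 + ι2 p1 * T + ι2 m1 * T ^ 2)
        (C (1 / 2 : ℂ) * V ^ 2 * T + ι1 n1 * T ^ 2) (C l1 * T ^ 2) →
    E2 = der (-Y ^ 2 + ι2 p2 * T + ι2 m2 * T ^ 2)
        (C (1 / 2 : ℂ) * T + ι1 n2 * T ^ 2) (C l2 * T ^ 2) →
    ¬ ModT3 ⁅E1, E2⁆ 0 ∧ ⁅E1, E2⁆ V ∉ Ideal.span {T ^ 3} :=
  no_second_order_extension_general p1 p2

end
end

section
/- Let a1, b1, c1, a2, b2, c2, A1, A2, e1, e2 ∈ ℂ and set p1 = (a1·v² + b1·v + c1)·y² + (2·(1 − A1)·v + e1)·y and p2 = (a2·v² + b2·v + c2)·y² + (−2·A2·v + e2)·y in ℂ[v,y]. If −v²y²·∂_y p2 − 2y·p1 + y²·∂_y p1 + 2v²y·p2 + 2vy²·A1 = 0 in ℂ[v,y], then A2 = 0, e1 = 0, e2 = 0 and A1 = 1/2. -/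
/-!
Writing `p = Q * y² + L * y` with `Q`, `L` free of `y`, the terms of the relation involving `Q`
cancel, and the relation collapses to `y² * (v² * L₂ - L₁ + 2 * A₁ * v) = 0`. Setting `y = 1`, the
cubic `-2 A₂ v³ + e₂ v² + (4 A₁ - 2) v - e₁` vanishes at every `v ∈ ℂ`, so its coefficients vanish.
-/

open MvPolynomial

theorem MvPolynomial.pderiv_mul_X_sq_add_mul_X {σ R : Type*} [CommSemiring R] (i : σ)
    {Q L : MvPolynomial σ R} (hQ : pderiv i Q = 0) (hL : pderiv i L = 0) :
    pderiv i (Q * X i ^ 2 + L * X i) = Q * (2 * X i) + L := by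
  simp only [map_add, Derivation.leibniz, Derivation.leibniz_pow, pderiv_X_self, hQ, hL]
  simp only [smul_eq_mul, nsmul_eq_mul]
  ring

theorem cubic_coeffs_eq_zero_of_forall_eq_zero {R : Type*} [CommRing R] [IsDomain R] [Infinite R]
    {a b c d : R} (h : ∀ v : R, a * v ^ 3 + b * v ^ 2 + c * v + d = 0) :
    a = 0 ∧ b = 0 ∧ c = 0 ∧ d = 0 := by
  have hp : (Polynomial.C a * Polynomial.X ^ 3 + Polynomial.C b * Polynomial.X ^ 2 +
      Polynomial.C c * Polynomial.X + Polynomial.C d : Polynomial R) = 0 :=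
    Polynomial.funext fun v => by simpa using h v
  refine ⟨?_, ?_, ?_, ?_⟩
  · simpa using congrArg (Polynomial.coeff · 3) hp
  · simpa using congrArg (Polynomial.coeff · 2) hp
  · simpa using congrArg (Polynomial.coeff · 1) hp
  · simpa using congrArg (Polynomial.coeff · 0) hp

theorem constants_determined (a1 b1 c1 a2 b2 c2 A1 A2 e1 e2 : ℂ)
    (p1 p2 : MvPolynomial (Fin 2) ℂ)
    (hp1 : p1 = (C a1 * X 0 ^ 2 + C b1 * X 0 + C c1) * X 1 ^ 2 +
        (C (2 * (1 - A1)) * X 0 + C e1) * X 1)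
    (hp2 : p2 = (C a2 * X 0 ^ 2 + C b2 * X 0 + C c2) * X 1 ^ 2 +
        (C (-2 * A2) * X 0 + C e2) * X 1)
    (h : -X 0 ^ 2 * X 1 ^ 2 * pderiv 1 p2 - 2 * X 1 * p1 + X 1 ^ 2 * pderiv 1 p1 +
        2 * X 0 ^ 2 * X 1 * p2 + 2 * X 0 * X 1 ^ 2 * C A1 = 0) :
    A2 = 0 ∧ e1 = 0 ∧ e2 = 0 ∧ A1 = 1 / 2 := by
  have hX0 : pderiv 1 (X 0 : MvPolynomial (Fin 2) ℂ) = 0 := by simp [pderiv_X]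
  rw [hp1, hp2, pderiv_mul_X_sq_add_mul_X _ (by simp [hX0]) (by simp [hX0]),
    pderiv_mul_X_sq_add_mul_X _ (by simp [hX0]) (by simp [hX0])] at h
  have hcubic : ∀ v : ℂ, -2 * A2 * v ^ 3 + e2 * v ^ 2 + (4 * A1 - 2) * v + -e1 = 0 := fun v => by
    have hv := congrArg (eval ![v, 1]) h
    simp only [map_add, map_mul, map_neg, map_sub, map_pow, map_zero, eval_C, eval_X,
      map_ofNat, Matrix.cons_val_zero, Matrix.cons_val_one] at hv
    linear_combination hv
  obtain ⟨hA2, he2, hA1, he1⟩ := cubic_coeffs_eq_zero_of_forall_eq_zero hcubic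
  refine ⟨?_, ?_, he2, ?_⟩
  · linear_combination (-1 / 2) * hA2
  · linear_combination -he1
  · linear_combination (1 / 4) * hA1
end
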